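/- Generic recurrence relation for the C-orbit functions of C_3 (multiplication by u₃): For positive integers k, l, m let λ(k,l,m) = (k+l+m, l+m, m) ∈ ℝ³ and define C_{(k,l,m)}(x) = 8 Σ_{σ∈S₃} cos(2π λ(k,l,m)_{σ(1)} x₁)·cos(2π λ(k,l,m)_{σ(2)} x₂)·cos(2π λ(k,l,m)_{σ(3)} x₃) for x ∈ ℝ³. Then for all integers k, l ≥ 3 and m ≥ 2: 8 cos(2πx₁)cos(2πx₂)cos(2πx₃) · C_{(k,l,m)}(x) = C_{(k,l,m+1)}(x) + C_{(k,l−2,m+1)}(x) + C_{(k−2,l,m+1)}(x) + C_{(k,l+2,m−1)}(x) + C_{(k+2,l−2,m+1)}(x) + C_{(k−2,l+2,m−1)}(x) + C_{(k+2,l,m−1)}(x) + C_{(k,l,m−1)}(x). -/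
import Mathlib


open Real

/-- Coordinates of the strictly dominant weight `kω₁+lω₂+mω₃` of `C₃` in the
orthonormal basis: `λ(k,l,m) = (k+l+m, l+m, m)`. -/
noncomputable def lamC3 (k l m : ℕ) : Fin 3 → ℝ :=
  ![(k : ℝ) + l + m, (l : ℝ) + m, (m : ℝ)]

/-- The `C`-orbit function `C_{(k,l,m)}` of `C₃` in orthonormal coordinates:
`C_{(k,l,m)}(x) = 8 Σ_{σ∈S₃} Π_i cos(2π λ_{σ(i)} x_i)`. -/
noncomputable def CC3 (k l m : ℕ) (x : Fin 3 → ℝ) : ℝ :=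
  8 * ∑ σ : Equiv.Perm (Fin 3), ∏ i : Fin 3, cos (2 * π * lamC3 k l m (σ i) * x i)

/-- Symmetrized sum of products of cosines over the six permutations of `(a,b,c)`. -/
noncomputable def S3 (a b c x0 x1 x2 : ℝ) : ℝ :=
    cos (2*π*a*x0) * cos (2*π*b*x1) * cos (2*π*c*x2)
  + cos (2*π*a*x0) * cos (2*π*c*x1) * cos (2*π*b*x2)
  + cos (2*π*b*x0) * cos (2*π*a*x1) * cos (2*π*c*x2)
  + cos (2*π*b*x0) * cos (2*π*c*x1) * cos (2*π*a*x2)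
  + cos (2*π*c*x0) * cos (2*π*a*x1) * cos (2*π*b*x2)
  + cos (2*π*c*x0) * cos (2*π*b*x1) * cos (2*π*a*x2)

lemma perm3_sum (f : Equiv.Perm (Fin 3) → ℝ) :
    ∑ σ : Equiv.Perm (Fin 3), f σ =
      f 1 + f (Equiv.swap 0 1) + f (Equiv.swap 0 2) + f (Equiv.swap 1 2)
        + f (Equiv.swap 0 1 * Equiv.swap 0 2) + f (Equiv.swap 0 2 * Equiv.swap 0 1) := by
  rw [show (Finset.univ : Finset (Equiv.Perm (Fin 3))) =
      {1, Equiv.swap 0 1, Equiv.swap 0 2, Equiv.swap 1 2,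
        Equiv.swap 0 1 * Equiv.swap 0 2, Equiv.swap 0 2 * Equiv.swap 0 1} by decide]
  rw [Finset.sum_insert (by decide), Finset.sum_insert (by decide),
    Finset.sum_insert (by decide), Finset.sum_insert (by decide),
    Finset.sum_insert (by decide), Finset.sum_singleton]
  ring

lemma CC3_eq (k l m : ℕ) (x : Fin 3 → ℝ) :
    CC3 k l m x = 8 * S3 ((k:ℝ)+l+m) ((l:ℝ)+m) (m:ℝ) (x 0) (x 1) (x 2) := by
  rw [CC3, perm3_sum]
  simp only [Fin.prod_univ_three, lamC3, Equiv.Perm.one_apply, Equiv.Perm.mul_apply,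
    Equiv.swap_apply_left, Equiv.swap_apply_right, S3]
  simp only [show (Equiv.swap (0:Fin 3) 1) 2 = 2 from by decide,
    show (Equiv.swap (0:Fin 3) 2) 1 = 1 from by decide,
    show (Equiv.swap (1:Fin 3) 2) 0 = 0 from by decide,
    show (Equiv.swap (0:Fin 3) 1) 1 = 0 from by decide,
    show (Equiv.swap (0:Fin 3) 2) 2 = 0 from by decide,
    show (Equiv.swap (1:Fin 3) 2) 1 = 2 from by decide,
    show (Equiv.swap (1:Fin 3) 2) 2 = 1 from by decide,
    show (Equiv.swap (0:Fin 3) 1) 0 = 1 from by decide,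
    show (Equiv.swap (0:Fin 3) 2) 0 = 2 from by decide,
    Matrix.cons_val_zero, Matrix.cons_val_one, Matrix.head_cons,
    Matrix.cons_val_two, Matrix.tail_cons]
  ring

lemma keyC3 (K L M x0 x1 x2 : ℝ) :
    8 * cos (2*π*x0) * cos (2*π*x1) * cos (2*π*x2) * (8 * S3 K L M x0 x1 x2) =
      8 * S3 (K+1) (L+1) (M+1) x0 x1 x2 + 8 * S3 (K-1) (L-1) (M+1) x0 x1 x2
      + 8 * S3 (K-1) (L+1) (M+1) x0 x1 x2 + 8 * S3 (K+1) (L+1) (M-1) x0 x1 x2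
      + 8 * S3 (K+1) (L-1) (M+1) x0 x1 x2 + 8 * S3 (K-1) (L+1) (M-1) x0 x1 x2
      + 8 * S3 (K+1) (L-1) (M-1) x0 x1 x2 + 8 * S3 (K-1) (L-1) (M-1) x0 x1 x2 := by
  have hp : ∀ A t : ℝ, cos (2*π*(A+1)*t) =
      cos (2*π*A*t) * cos (2*π*t) - sin (2*π*A*t) * sin (2*π*t) := fun A t => by
    rw [show 2*π*(A+1)*t = 2*π*A*t + 2*π*t by ring, cos_add]
  have hm : ∀ A t : ℝ, cos (2*π*(A-1)*t) =
      cos (2*π*A*t) * cos (2*π*t) + sin (2*π*A*t) * sin (2*π*t) := fun A t => by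
    rw [show 2*π*(A-1)*t = 2*π*A*t - 2*π*t by ring, cos_sub]
  simp only [S3, hp, hm]
  ring

/-- Generic recurrence relation for the `C`-orbit functions of `C₃`
(multiplication by `u₃ = 8 cos 2πx₁ cos 2πx₂ cos 2πx₃`), valid for `k, l ≥ 3`, `m ≥ 2`. -/
theorem CC3_recurrence (k l m : ℕ) (hk : 3 ≤ k) (hl : 3 ≤ l) (hm : 2 ≤ m) (x : Fin 3 → ℝ) :
    8 * cos (2 * π * x 0) * cos (2 * π * x 1) * cos (2 * π * x 2) * CC3 k l m x =
      CC3 k l (m + 1) x + CC3 k (l - 2) (m + 1) x + CC3 (k - 2) l (m + 1) x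
        + CC3 k (l + 2) (m - 1) x + CC3 (k + 2) (l - 2) (m + 1) x
        + CC3 (k - 2) (l + 2) (m - 1) x + CC3 (k + 2) l (m - 1) x + CC3 k l (m - 1) x := by
  have hk2 : ((k - 2 : ℕ) : ℝ) = (k : ℝ) - 2 := by
    rw [Nat.cast_sub (by omega)]; norm_num
  have hl2 : ((l - 2 : ℕ) : ℝ) = (l : ℝ) - 2 := by
    rw [Nat.cast_sub (by omega)]; norm_num
  have hm1 : ((m - 1 : ℕ) : ℝ) = (m : ℝ) - 1 := by
    rw [Nat.cast_sub (by omega)]; norm_num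
  simp only [CC3_eq, hk2, hl2, hm1, Nat.cast_add, Nat.cast_ofNat, Nat.cast_one]
  have h := keyC3 ((k:ℝ)+l+m) ((l:ℝ)+m) (m:ℝ) (x 0) (x 1) (x 2)
  rw [show ((k:ℝ)+l+(m+1)) = ((k:ℝ)+l+m)+1 by ring,
    show ((l:ℝ)+(m+1)) = ((l:ℝ)+m)+1 by ring,
    show ((k:ℝ)+((l:ℝ)-2)+(m+1)) = ((k:ℝ)+l+m)-1 by ring,
    show (((l:ℝ)-2)+(m+1)) = ((l:ℝ)+m)-1 by ring,
    show (((k:ℝ)-2)+l+(m+1)) = ((k:ℝ)+l+m)-1 by ring,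
    show ((k:ℝ)+(l+2)+((m:ℝ)-1)) = ((k:ℝ)+l+m)+1 by ring,
    show (((l:ℝ)+2)+((m:ℝ)-1)) = ((l:ℝ)+m)+1 by ring,
    show ((k:ℝ)+2+((l:ℝ)-2)+((m:ℝ)+1)) = ((k:ℝ)+l+m)+1 by ring,
    show (((k:ℝ)-2)+(l+2)+((m:ℝ)-1)) = ((k:ℝ)+l+m)-1 by ring,
    show ((k:ℝ)+2+(l:ℝ)+((m:ℝ)-1)) = ((k:ℝ)+l+m)+1 by ring,
    show ((l:ℝ)+((m:ℝ)-1)) = ((l:ℝ)+m)-1 by ring,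
    show ((k:ℝ)+(l:ℝ)+((m:ℝ)-1)) = ((k:ℝ)+l+m)-1 by ring]
  linarith [h]
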